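/- Let p_0 = (B⁰, i⁰, j⁰) ∈ 𝕄, A = (A,I,J) ∈ 𝕄, and let γ = (h_1, …, h_m) be a closed loop in the quiver. Let M be the number of indices s with h_s ∈ Ω̄ and suppose M ≥ 1. Then, as ℏ → 0 through nonzero complex values, ℏ^M · Tr(M_{p_A(ℏ)}(γ)) converges to Tr(M_{p_0 + A}(γ)), where p_0 + A is the componentwise sum. -/
import Mathlib


open Matrix Filter Topology

namespace QuiverCL

noncomputable section

variable {n : ℕ} {E : Type*}

/-- Cast a matrix along equalities of vertices. -/
def castM2 (v : Fin n → ℕ) {a b a' b' : Fin n} (ea : a = a') (eb : b = b')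
    (M : Matrix (Fin (v a)) (Fin (v b)) ℂ) : Matrix (Fin (v a')) (Fin (v b')) ℂ :=
  Matrix.reindex (finCongr (congrArg v ea)) (finCongr (congrArg v eb)) M

/-- The quiver representation space `𝕄`: a triple `(B, i, j)` of families of matrices,
`B h : V (src h) → V (tgt h)`, `i k : W k → V k`, `j k : V k → W k`
(matrices act on column vectors, so `Hom(V_a, V_b)` is `Matrix (Fin (v b)) (Fin (v a)) ℂ`). -/
abbrev Rep (src tgt : E → Fin n) (v w : Fin n → ℕ) : Type _ :=
  (∀ h : E, Matrix (Fin (v (tgt h))) (Fin (v (src h))) ℂ)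
  × (∀ k : Fin n, Matrix (Fin (v k)) (Fin (w k)) ℂ)
  × (∀ k : Fin n, Matrix (Fin (w k)) (Fin (v k)) ℂ)

/-- `ε(h) = 1` for `h ∈ Ω` and `ε(h) = -1` for `h ∈ Ω̄`. -/
def eps (Ω : E → Prop) [DecidablePred Ω] (h : E) : ℂ := if Ω h then 1 else -1

/-- The matrix `B_{h̄}` attached to the reversed edge, recast so that it is a matrix
`V (tgt h) → V (src h)`. -/
def Bbar (src tgt : E → Fin n) (bar : E → E) (v w : Fin n → ℕ)
    (hbs : ∀ h, src (bar h) = tgt h) (hbt : ∀ h, tgt (bar h) = src h)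
    (p : Rep src tgt v w) (h : E) : Matrix (Fin (v (src h))) (Fin (v (tgt h))) ℂ :=
  castM2 v (hbt h) (hbs h) (p.1 (bar h))

/-- The real moment map, componentwise:
`μ_ℝ(B,i,j)_k = (i/2)·[Σ_{in(h)=k} (B_h B_h† − B_{h̄}† B_{h̄}) + i_k i_k† − j_k† j_k]`. -/
def muR [Fintype E] (src tgt : E → Fin n) (bar : E → E) (v w : Fin n → ℕ)
    (hbs : ∀ h, src (bar h) = tgt h) (hbt : ∀ h, tgt (bar h) = src h)
    (p : Rep src tgt v w) (k : Fin n) : Matrix (Fin (v k)) (Fin (v k)) ℂ :=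
  (Complex.I / 2) •
    ((∑ h : E, if e : tgt h = k then
        castM2 v e e
          (p.1 h * (p.1 h)ᴴ -
            (Bbar src tgt bar v w hbs hbt p h)ᴴ * Bbar src tgt bar v w hbs hbt p h)
      else 0)
      + (p.2.1 k * (p.2.1 k)ᴴ - (p.2.2 k)ᴴ * p.2.2 k))

/-- The complex moment map, componentwise:
`μ_ℂ(B,i,j)_k = Σ_{in(h)=k} ε(h)·B_h B_{h̄} + i_k j_k`. -/
def muC [Fintype E] (src tgt : E → Fin n) (bar : E → E) (Ω : E → Prop) [DecidablePred Ω]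
    (v w : Fin n → ℕ)
    (hbs : ∀ h, src (bar h) = tgt h) (hbt : ∀ h, tgt (bar h) = src h)
    (p : Rep src tgt v w) (k : Fin n) : Matrix (Fin (v k)) (Fin (v k)) ℂ :=
  (∑ h : E, if e : tgt h = k then
      eps Ω h • castM2 v e e (p.1 h * Bbar src tgt bar v w hbs hbt p h)
    else 0)
    + p.2.1 k * p.2.2 k

/-- The hyperkähler rotation `HK_ξ(B,i,j) = (B_h − ε(h)·ξ·B_{h̄}†, i_k − ξ·j_k†, j_k + ξ·i_k†)`. -/
def HK (src tgt : E → Fin n) (bar : E → E) (Ω : E → Prop) [DecidablePred Ω]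
    (v w : Fin n → ℕ)
    (hbs : ∀ h, src (bar h) = tgt h) (hbt : ∀ h, tgt (bar h) = src h)
    (ξ : ℂ) (p : Rep src tgt v w) : Rep src tgt v w :=
  ⟨fun h => p.1 h - (eps Ω h * ξ) • (Bbar src tgt bar v w hbs hbt p h)ᴴ,
   fun k => p.2.1 k - ξ • (p.2.2 k)ᴴ,
   fun k => p.2.2 k + ξ • (p.2.1 k)ᴴ⟩

/-- The gauge action `g·(B,i,j) = (g_{in(h)} B_h g_{out(h)}⁻¹, g_k i_k, j_k g_k⁻¹)`. -/
def gauge (src tgt : E → Fin n) (v w : Fin n → ℕ)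
    (g : ∀ k : Fin n, Matrix (Fin (v k)) (Fin (v k)) ℂ) (p : Rep src tgt v w) :
    Rep src tgt v w :=
  ⟨fun h => g (tgt h) * p.1 h * (g (src h))⁻¹,
   fun k => g k * p.2.1 k,
   fun k => p.2.2 k * (g k)⁻¹⟩

/-- The infinitesimal gauge action `l_p(ξ) = (ξ_{in(h)} B_h − B_h ξ_{out(h)}, ξ_k i_k, −j_k ξ_k)`. -/
def lp (src tgt : E → Fin n) (v w : Fin n → ℕ)
    (p : Rep src tgt v w) (ξ : ∀ k : Fin n, Matrix (Fin (v k)) (Fin (v k)) ℂ) :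
    Rep src tgt v w :=
  ⟨fun h => ξ (tgt h) * p.1 h - p.1 h * ξ (src h),
   fun k => ξ k * p.2.1 k,
   fun k => -(p.2.2 k * ξ k)⟩

/-- The adjoint of the infinitesimal gauge action, componentwise:
`l_p^*(q)_k = Σ_{in(h)=k} (A_h B_h† − B_{h̄}† A_{h̄}) + I_k i_k† − j_k† J_k`. -/
def lpStar [Fintype E] (src tgt : E → Fin n) (bar : E → E) (v w : Fin n → ℕ)
    (hbs : ∀ h, src (bar h) = tgt h) (hbt : ∀ h, tgt (bar h) = src h)
    (p q : Rep src tgt v w) (k : Fin n) : Matrix (Fin (v k)) (Fin (v k)) ℂ :=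
  (∑ h : E, if e : tgt h = k then
      castM2 v e e
        (q.1 h * (p.1 h)ᴴ -
          (Bbar src tgt bar v w hbs hbt p h)ᴴ * Bbar src tgt bar v w hbs hbt q h)
    else 0)
    + (q.2.1 k * (p.2.1 k)ᴴ - (p.2.2 k)ᴴ * q.2.2 k)

/-- The hermitian inner product
`⟨q, q′⟩ = Σ_h Tr(A_h A′_h†) + Σ_k Tr(I_k I′_k†) + Σ_k Tr(J_k J′_k†)` on `𝕄`. -/
def innerRep [Fintype E] (src tgt : E → Fin n) (v w : Fin n → ℕ)
    (q q' : Rep src tgt v w) : ℂ :=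
  (∑ h : E, (q.1 h * (q'.1 h)ᴴ).trace)
    + (∑ k : Fin n, (q.2.1 k * (q'.2.1 k)ᴴ).trace)
    + (∑ k : Fin n, (q.2.2 k * (q'.2.2 k)ᴴ).trace)

/-- The complex symplectic form
`ω_ℂ(q, q′) = Σ_h ε(h)·Tr(A_h A′_{h̄}) + Σ_k Tr(I_k J′_k − I′_k J_k)`. -/
def omegaC [Fintype E] (src tgt : E → Fin n) (bar : E → E) (Ω : E → Prop) [DecidablePred Ω]
    (v w : Fin n → ℕ)
    (hbs : ∀ h, src (bar h) = tgt h) (hbt : ∀ h, tgt (bar h) = src h)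
    (q q' : Rep src tgt v w) : ℂ :=
  (∑ h : E, eps Ω h * (q.1 h * Bbar src tgt bar v w hbs hbt q' h).trace)
    + ∑ k : Fin n, ((q.2.1 k * q'.2.2 k).trace - (q'.2.1 k * q.2.2 k).trace)

/-- The scaling action `t∘(B,i,j)`: multiply the `Ω̄`-components and the `j`-components by `t`. -/
def scale (src tgt : E → Fin n) (Ω : E → Prop) [DecidablePred Ω] (v w : Fin n → ℕ)
    (t : ℂ) (p : Rep src tgt v w) : Rep src tgt v w :=
  ⟨fun h => if Ω h then p.1 h else t • p.1 h,
   fun k => p.2.1 k,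
   fun k => t • p.2.2 k⟩

/-- The second complex structure `J(m, m′) = (−(m′)†, m†)` on `𝕄 = 𝕄_Ω ⊕ 𝕄_Ω̄`. -/
def Jmap (src tgt : E → Fin n) (bar : E → E) (Ω : E → Prop) [DecidablePred Ω]
    (v w : Fin n → ℕ)
    (hbs : ∀ h, src (bar h) = tgt h) (hbt : ∀ h, tgt (bar h) = src h)
    (q : Rep src tgt v w) : Rep src tgt v w :=
  ⟨fun h => (-(eps Ω h)) • (Bbar src tgt bar v w hbs hbt q h)ᴴ,
   fun k => -((q.2.2 k)ᴴ),
   fun k => (q.2.1 k)ᴴ⟩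

/-- The point `p_A(ℏ)` of `𝕄`: for `h ∈ Ω` the `h`-component is `B⁰_h + A_h − ℏ·(B⁰_{h̄})†` and
for `h ∈ Ω̄` it is `ℏ⁻¹·(B⁰_h + A_h) + (B⁰_{h̄})†`; the `i`-components are
`i⁰_k + I_k − ℏ·(j⁰_k)†` and the `j`-components are `ℏ⁻¹·(j⁰_k + J_k) + (i⁰_k)†`. -/
def pA (src tgt : E → Fin n) (bar : E → E) (Ω : E → Prop) [DecidablePred Ω]
    (v w : Fin n → ℕ)
    (hbs : ∀ h, src (bar h) = tgt h) (hbt : ∀ h, tgt (bar h) = src h)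
    (p0 A : Rep src tgt v w) (ℏ : ℂ) : Rep src tgt v w :=
  ⟨fun h => if Ω h
      then p0.1 h + A.1 h - ℏ • (Bbar src tgt bar v w hbs hbt p0 h)ᴴ
      else ℏ⁻¹ • (p0.1 h + A.1 h) + (Bbar src tgt bar v w hbs hbt p0 h)ᴴ,
   fun k => p0.2.1 k + A.2.1 k - ℏ • (p0.2.2 k)ᴴ,
   fun k => ℏ⁻¹ • (p0.2.2 k + A.2.2 k) + (p0.2.1 k)ᴴ⟩

/-- The linearization of the real moment map equation:
`ℒ(p,ξ)_k = Σ_{in(h)=k} [B_h(B_h† ξ_{in(h)} − ξ_{out(h)} B_h†) −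
(B_{h̄}† ξ_{out(h)} − ξ_{in(h)} B_{h̄}†) B_{h̄}] + i_k i_k† ξ_k + ξ_k j_k† j_k`. -/
def linL [Fintype E] (src tgt : E → Fin n) (bar : E → E) (v w : Fin n → ℕ)
    (hbs : ∀ h, src (bar h) = tgt h) (hbt : ∀ h, tgt (bar h) = src h)
    (p : Rep src tgt v w) (ξ : ∀ k : Fin n, Matrix (Fin (v k)) (Fin (v k)) ℂ)
    (k : Fin n) : Matrix (Fin (v k)) (Fin (v k)) ℂ :=
  (∑ h : E, if e : tgt h = k then
      castM2 v e e
        (p.1 h * ((p.1 h)ᴴ * ξ (tgt h) - ξ (src h) * (p.1 h)ᴴ)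
          - ((Bbar src tgt bar v w hbs hbt p h)ᴴ * ξ (src h)
              - ξ (tgt h) * (Bbar src tgt bar v w hbs hbt p h)ᴴ)
            * Bbar src tgt bar v w hbs hbt p h)
    else 0)
    + (p.2.1 k * (p.2.1 k)ᴴ * ξ k + ξ k * (p.2.2 k)ᴴ * p.2.2 k)

/-- The product of the matrices of `p` along a list of edges `[h_1, …, h_m]`, as a matrix
`V_a → V_b`; when the list is a path with `a = out(h_1)` and `b = in(h_m)` this is the genuine
composite `B_{h_m} ⋯ B_{h_1}`. -/
def prodAlong (src tgt : E → Fin n) (v w : Fin n → ℕ) (p : Rep src tgt v w) :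
    List E → (a : Fin n) → (b : Fin n) → Matrix (Fin (v b)) (Fin (v a)) ℂ
  | [], a, b => if e : a = b then castM2 v e rfl (1 : Matrix (Fin (v a)) (Fin (v a)) ℂ) else 0
  | (h : E) :: rest, a, b =>
      prodAlong src tgt v w p rest (tgt h) b *
        (if e : src h = a then castM2 v rfl e (p.1 h) else 0)

theorem prodAlong_congr_fst (src tgt : E → Fin n) (v w : Fin n → ℕ)
    (p q : Rep src tgt v w) (hpq : p.1 = q.1) :
    ∀ (L : List E) (a b : Fin n),
      prodAlong src tgt v w p L a b = prodAlong src tgt v w q L a b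
  | [], _, _ => rfl
  | h :: rest, a, b => by
      rw [prodAlong, prodAlong, prodAlong_congr_fst src tgt v w p q hpq rest, hpq]

theorem castM2_smul (v : Fin n → ℕ) {a b a' b' : Fin n} (ea : a = a') (eb : b = b')
    (t : ℂ) (M : Matrix (Fin (v a)) (Fin (v b)) ℂ) :
    castM2 v ea eb (t • M) = t • castM2 v ea eb M := by
  ext i j
  simp [castM2]

theorem prodAlong_scale (src tgt : E → Fin n) (Ω : E → Prop) [DecidablePred Ω]
    (v w : Fin n → ℕ) (t : ℂ) (p : Rep src tgt v w) :
    ∀ (L : List E) (a b : Fin n),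
      prodAlong src tgt v w (scale src tgt Ω v w t p) L a b
        = t ^ (L.countP fun e => decide (¬ Ω e)) • prodAlong src tgt v w p L a b
  | [], a, b => by simp [prodAlong]
  | h :: rest, a, b => by
      rw [prodAlong, prodAlong, prodAlong_scale src tgt Ω v w t p rest]
      by_cases hh : Ω h
      · simp [scale, hh, List.countP_cons, smul_mul_assoc]
      · have hs : (scale src tgt Ω v w t p).1 h = t • p.1 h := by simp [scale, hh]
        have hc : List.countP (fun e => decide (¬ Ω e)) (h :: rest)
            = List.countP (fun e => decide (¬ Ω e)) rest + 1 := by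
          simp [List.countP_cons, hh]
        rw [hs, hc, pow_succ]
        by_cases e : src h = a
        · rw [dif_pos e, dif_pos e, castM2_smul, Matrix.smul_mul, Matrix.mul_smul, smul_smul]
        · rw [dif_neg e, dif_neg e]
          simp

theorem prodAlong_continuous (src tgt : E → Fin n) (v w : Fin n → ℕ)
    (P : ℂ → Rep src tgt v w)
    (hP : ∀ h : E, Continuous fun t => (P t).1 h) :
    ∀ (L : List E) (a b : Fin n),
      Continuous fun t => prodAlong src tgt v w (P t) L a b
  | [], a, b => by
      simp only [prodAlong]; exact continuous_const
  | h :: rest, a, b => by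
      simp only [prodAlong]
      refine (prodAlong_continuous src tgt v w P hP rest (tgt h) b).matrix_mul ?_
      by_cases e : src h = a
      · simp only [e, dif_pos, castM2, Matrix.reindex_apply]
        exact (hP h).matrix_submatrix _ _
      · simp only [e, dif_neg, not_false_iff]
        exact continuous_const

/-- for a closed loop `γ` containing `M ≥ 1` edges of `Ω̄`,
`ℏ^M·Tr(M_{p_A(ℏ)}(γ)) → Tr(M_{p_0+A}(γ))` as `ℏ → 0` through nonzero values. -/
theorem trace_pA_tendsto {n : ℕ} {E : Type*} [Fintype E]
    (src tgt : E → Fin n) (bar : E → E) (Ω : E → Prop) [DecidablePred Ω]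
    (v w : Fin n → ℕ)
    (hloop : ∀ h, src h ≠ tgt h)
    (hinv : ∀ h, bar (bar h) = h) (hfree : ∀ h, bar h ≠ h)
    (hbs : ∀ h, src (bar h) = tgt h) (hbt : ∀ h, tgt (bar h) = src h)
    (hor : ∀ h, Ω (bar h) ↔ ¬ Ω h)
    (p0 A : Rep src tgt v w)
    (γ : List E) (hne : γ ≠ [])
    (hchain : γ.Chain' (fun e e' => src e' = tgt e))
    (hclosed : src (γ.head hne) = tgt (γ.getLast hne))
    (hM : 1 ≤ γ.countP (fun e => decide (¬ Ω e))) :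
    Filter.Tendsto
      (fun ℏ : ℂ => ℏ ^ (γ.countP (fun e => decide (¬ Ω e)))
        * (prodAlong src tgt v w (pA src tgt bar Ω v w hbs hbt p0 A ℏ) γ
            (src (γ.head hne)) (src (γ.head hne))).trace)
      (𝓝[≠] (0 : ℂ))
      (𝓝 ((prodAlong src tgt v w (p0 + A) γ (src (γ.head hne)) (src (γ.head hne))).trace)) := by
  classical
  set a := src (γ.head hne) with ha
  set G : ℂ → Rep src tgt v w := fun t =>
    ⟨fun h => if Ω h then p0.1 h + A.1 h - t • (Bbar src tgt bar v w hbs hbt p0 h)ᴴ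
              else p0.1 h + A.1 h + t • (Bbar src tgt bar v w hbs hbt p0 h)ᴴ,
     (p0 + A).2.1, (p0 + A).2.2⟩ with hGdef
  have hGc : ∀ h : E, Continuous fun t => (G t).1 h := by
    intro h
    by_cases hh : Ω h <;> simp only [hGdef, hh, if_true, if_false] <;>
      [exact continuous_const.sub (continuous_id.smul continuous_const);
       exact continuous_const.add (continuous_id.smul continuous_const)]
  have hG0 : (G 0).1 = (p0 + A).1 := by
    funext h
    by_cases hh : Ω h <;> simp [hGdef, hh, Prod.fst_add]
  have key : Filter.Tendsto (fun t : ℂ => (prodAlong src tgt v w (G t) γ a a).trace)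
      (𝓝 0) (𝓝 ((prodAlong src tgt v w (p0 + A) γ a a).trace)) := by
    have hc := ((prodAlong_continuous src tgt v w G hGc γ a a).matrix_trace).tendsto 0
    rwa [prodAlong_congr_fst src tgt v w (G 0) (p0 + A) hG0 γ a a] at hc
  have heq : ∀ᶠ t in 𝓝[≠] (0 : ℂ),
      (fun t : ℂ => (prodAlong src tgt v w (G t) γ a a).trace) t
        = (fun ℏ : ℂ => ℏ ^ (γ.countP (fun e => decide (¬ Ω e)))
            * (prodAlong src tgt v w (pA src tgt bar Ω v w hbs hbt p0 A ℏ) γ a a).trace) t := by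
    filter_upwards [self_mem_nhdsWithin] with t ht
    have ht' : t ≠ 0 := ht
    have h1 : (scale src tgt Ω v w t (pA src tgt bar Ω v w hbs hbt p0 A t)).1 = (G t).1 := by
      funext h
      by_cases hh : Ω h
      · simp [scale, pA, hh, hGdef]
      · simp only [scale, pA, hh, if_false, hGdef, smul_add, smul_smul,
          mul_inv_cancel₀ ht', one_smul]
    calc (prodAlong src tgt v w (G t) γ a a).trace
        = (prodAlong src tgt v w
            (scale src tgt Ω v w t (pA src tgt bar Ω v w hbs hbt p0 A t)) γ a a).trace := by
          rw [prodAlong_congr_fst src tgt v w _ _ h1 γ a a]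
      _ = (t ^ (γ.countP (fun e => decide (¬ Ω e)))
            • prodAlong src tgt v w (pA src tgt bar Ω v w hbs hbt p0 A t) γ a a).trace := by
          rw [prodAlong_scale]
      _ = t ^ (γ.countP (fun e => decide (¬ Ω e)))
            * (prodAlong src tgt v w (pA src tgt bar Ω v w hbs hbt p0 A t) γ a a).trace := by
          rw [Matrix.trace_smul]; rfl
  exact Filter.Tendsto.congr' heq (key.mono_left nhdsWithin_le_nhds)

end

end QuiverCL
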